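/- Let η be the Minkowski form on ℝ^N (Lorentz signature, N−1 positive and 1 negative square). If (K_λ)_{λ=1,…,r} is a linearly independent family of skew-symmetric bilinear forms on ℝ^N (bivectors) that are null and mutually orthogonal with respect to the bivector inner product, i.e. ⟨K_λ, K_μ⟩ = 0 for all λ, μ (including λ = μ), then r ≤ N − 1. -/

import Mathlib

open Matrix

/-- The standard Minkowski diagonal matrix `diag(1,…,1,−1)` (N−1 positive squares,
one negative square). -/
def minkDiag (N : ℕ) : Matrix (Fin N) (Fin N) ℝ :=
  Matrix.diagonal (fun i => if (i : ℕ) + 1 < N then 1 else -1)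

/-- The bivector inner product `⟨J,K⟩ = (1/2) Σ_{a,b} J_{ab} K^{ab}`, where
`K^{ab} = (η⁻¹ K η⁻¹)_{ab}` is `K` with both indices raised by the inverse metric. -/
noncomputable def bivInner {N : ℕ} (η J K : Matrix (Fin N) (Fin N) ℝ) : ℝ :=
  (1 / 2 : ℝ) * ∑ a, ∑ b, J a b * (η⁻¹ * K * η⁻¹) a b

/-!
A congruence `η ↦ Pᵀ η P` preserves the bivector inner product, so we may take
`η = diag(1,…,1,−1)`. By bilinearity every linear combination `M` of the `K_λ` is again a null
skew bivector. If the spatial entries `M_{a,N}` of its time column vanish, skewness kills the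
whole last row and column, and then `⟨M,M⟩ = ½ Σ M_{ab}²` forces `M = 0`. Thus the time
column, a linear map to `ℝ^{N−1}`, is injective on the span of the `K_λ`, whence `r ≤ N − 1`.
-/

theorem LinearIndependent.transpose_mul_mul {n ι R : Type*} [Fintype n] [DecidableEq n]
    [CommRing R] {K : ι → Matrix n n R} (hK : LinearIndependent R K) {P : Matrix n n R}
    (hP : IsUnit P.det) : LinearIndependent R fun l => Pᵀ * K l * P := by
  have hPu : IsUnit P := (isUnit_iff_isUnit_det P).mpr hP
  refine hK.map' (LinearMap.mulLeftRight R (Pᵀ, P)) ?_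
  refine LinearMap.ker_eq_bot.mpr fun A B hAB => ?_
  simp only [LinearMap.mulLeftRight_apply, Matrix.mul_assoc] at hAB
  exact hPu.mul_right_cancel (((isUnit_transpose P).mpr hPu).mul_left_cancel hAB)

theorem Matrix.transpose_sum_smul_of_skew {m ι R : Type*} [Fintype ι] [Ring R]
    {K : ι → Matrix m m R} (hskew : ∀ l, (K l)ᵀ = -K l) (g : ι → R) :
    (∑ l, g l • K l)ᵀ = -∑ l, g l • K l := by
  simp [transpose_sum, hskew, Finset.sum_neg_distrib]

section

variable {N : ℕ}

theorem bivInner_eq_trace (η J K : Matrix (Fin N) (Fin N) ℝ) :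
    bivInner η J K = 1 / 2 * trace (J * (η⁻¹ * K * η⁻¹)ᵀ) := by
  rw [bivInner, ← sum_hadamard_eq]
  rfl

theorem bivInner_transpose_mul_mul {P : Matrix (Fin N) (Fin N) ℝ} (hP : IsUnit P.det)
    (η J K : Matrix (Fin N) (Fin N) ℝ) :
    bivInner (Pᵀ * η * P) (Pᵀ * J * P) (Pᵀ * K * P) = bivInner η J K := by
  have hPP : P * P⁻¹ = 1 := mul_nonsing_inv P hP
  have hPTPT : P⁻¹ᵀ * Pᵀ = 1 := by rw [← transpose_mul, hPP, transpose_one]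
  have hraise : (Pᵀ * η * P)⁻¹ * (Pᵀ * K * P) * (Pᵀ * η * P)⁻¹
      = P⁻¹ * (η⁻¹ * K * η⁻¹) * P⁻¹ᵀ := by
    simp only [Matrix.mul_inv_rev, ← transpose_nonsing_inv, Matrix.mul_assoc]
    simp only [← Matrix.mul_assoc P⁻¹ᵀ Pᵀ, hPTPT, ← Matrix.mul_assoc P P⁻¹, hPP,
      Matrix.one_mul]
  rw [bivInner_eq_trace, bivInner_eq_trace, hraise]
  congr 1
  calc trace (Pᵀ * J * P * (P⁻¹ * (η⁻¹ * K * η⁻¹) * P⁻¹ᵀ)ᵀ)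
      = trace (Pᵀ * (J * (η⁻¹ * K * η⁻¹)ᵀ * P⁻¹ᵀ)) := by
        simp only [transpose_mul, transpose_transpose, Matrix.mul_assoc]
        rw [← Matrix.mul_assoc P P⁻¹, hPP, Matrix.one_mul]
    _ = trace (J * (η⁻¹ * K * η⁻¹)ᵀ) := by
        rw [trace_mul_comm, Matrix.mul_assoc, hPTPT, Matrix.mul_one]

noncomputable def bivInnerForm (η : Matrix (Fin N) (Fin N) ℝ) :
    LinearMap.BilinForm ℝ (Matrix (Fin N) (Fin N) ℝ) :=
  LinearMap.mk₂ ℝ (bivInner η)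
    (fun J₁ J₂ K => by
      simp only [bivInner, Matrix.add_apply, add_mul, Finset.sum_add_distrib, mul_add])
    (fun c J K => by
      simp only [bivInner, Matrix.smul_apply, smul_eq_mul, Finset.mul_sum, mul_assoc,
        mul_left_comm])
    (fun J K₁ K₂ => by
      simp only [bivInner, Matrix.add_mul, Matrix.add_apply, mul_add, Finset.sum_add_distrib])
    (fun c J K => by
      simp only [bivInner, Matrix.mul_smul, Matrix.smul_mul, Matrix.smul_apply, smul_eq_mul,
        Finset.mul_sum, mul_left_comm])

theorem bivInnerForm_apply (η J K : Matrix (Fin N) (Fin N) ℝ) :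
    bivInnerForm η J K = bivInner η J K :=
  rfl

theorem bivInner_sum_smul_self_eq_zero {ι : Type*} [Fintype ι]
    {η : Matrix (Fin N) (Fin N) ℝ} {K : ι → Matrix (Fin N) (Fin N) ℝ}
    (horth : ∀ l m, bivInner η (K l) (K m) = 0) (g : ι → ℝ) :
    bivInner η (∑ l, g l • K l) (∑ l, g l • K l) = 0 := by
  rw [← bivInnerForm_apply]
  simp [map_sum, bivInnerForm_apply, horth]

theorem minkDiag_mul_self : minkDiag N * minkDiag N = 1 := by
  rw [minkDiag, diagonal_mul_diagonal, ← diagonal_one]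
  congr 1
  ext i
  split_ifs <;> norm_num

theorem inv_minkDiag : (minkDiag N)⁻¹ = minkDiag N :=
  inv_eq_right_inv minkDiag_mul_self

theorem minkDiag_mul_mul_minkDiag {n : ℕ} {M : Matrix (Fin (n + 1)) (Fin (n + 1)) ℝ}
    (hcol : ∀ a, M a (Fin.last n) = 0) (hrow : ∀ b, M (Fin.last n) b = 0) :
    minkDiag (n + 1) * M * minkDiag (n + 1) = M := by
  ext a b
  rw [minkDiag, mul_diagonal, diagonal_mul]
  rcases Fin.eq_castSucc_or_eq_last a with ⟨a, rfl⟩ | rfl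
  · rcases Fin.eq_castSucc_or_eq_last b with ⟨b, rfl⟩ | rfl
    · simp
    · simp [hcol]
  · simp [hrow]

theorem eq_zero_of_bivInner_minkDiag_self_eq_zero {n : ℕ}
    {M : Matrix (Fin (n + 1)) (Fin (n + 1)) ℝ} (hskew : Mᵀ = -M)
    (hnull : bivInner (minkDiag (n + 1)) M M = 0)
    (htime : ∀ a : Fin n, M a.castSucc (Fin.last n) = 0) : M = 0 := by
  have hcol : ∀ a, M a (Fin.last n) = 0 := by
    refine Fin.lastCases ?_ htime
    have := congr_fun₂ hskew (Fin.last n) (Fin.last n)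
    simp only [transpose_apply, Matrix.neg_apply] at this
    linarith
  have hrow : ∀ b, M (Fin.last n) b = 0 := fun b => by
    simpa [hcol] using congr_fun₂ hskew b (Fin.last n)
  rw [bivInner_eq_trace, inv_minkDiag, minkDiag_mul_mul_minkDiag hcol hrow] at hnull
  have : (M * Mᴴ).trace = 0 := by simpa using hnull
  exact trace_mul_conjTranspose_self_eq_zero_iff.mp this

def timeColumn (R : Type*) [Semiring R] (n : ℕ) :
    Matrix (Fin (n + 1)) (Fin (n + 1)) R →ₗ[R] Fin n → R where
  toFun M a := M a.castSucc (Fin.last n)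
  map_add' _ _ := rfl
  map_smul' _ _ := rfl

theorem card_le_of_bivInner_minkDiag_eq_zero {n r : ℕ}
    {K : Fin r → Matrix (Fin (n + 1)) (Fin (n + 1)) ℝ} (hskew : ∀ l, (K l)ᵀ = -K l)
    (hK : LinearIndependent ℝ K) (horth : ∀ l m, bivInner (minkDiag (n + 1)) (K l) (K m) = 0) :
    r ≤ n := by
  have hdisj : Disjoint (Submodule.span ℝ (Set.range K)) (LinearMap.ker (timeColumn ℝ n)) := by
    refine Submodule.disjoint_def.mpr fun M hM hker => ?_
    obtain ⟨g, rfl⟩ := (Submodule.mem_span_range_iff_exists_fun ℝ).mp hM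
    exact eq_zero_of_bivInner_minkDiag_self_eq_zero (transpose_sum_smul_of_skew hskew g)
      (bivInner_sum_smul_self_eq_zero horth g) (congr_fun hker)
  simpa using (hK.map hdisj).fintype_card_le_finrank

end

theorem null_orthogonal_bivectors_le_general (N r : ℕ) (η : Matrix (Fin N) (Fin N) ℝ)
    (hsig : ∃ P : Matrix (Fin N) (Fin N) ℝ, IsUnit P.det ∧ Pᵀ * η * P = minkDiag N)
    (K : Fin r → Matrix (Fin N) (Fin N) ℝ)
    (hskew : ∀ l, (K l)ᵀ = -(K l))
    (hli : LinearIndependent ℝ K)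
    (horth : ∀ l m : Fin r, bivInner η (K l) (K m) = 0) :
    r ≤ N - 1 := by
  obtain ⟨P, hP, hPη⟩ := hsig
  cases N with
  | zero => simpa [Module.finrank_matrix] using hli.fintype_card_le_finrank
  | succ n =>
    refine card_le_of_bivInner_minkDiag_eq_zero (n := n) (fun l => ?_)
      (hli.transpose_mul_mul hP) fun l m => ?_
    · simp [transpose_mul, hskew, Matrix.mul_assoc]
    · rw [← hPη, bivInner_transpose_mul_mul hP, horth]

/-- **Proposition C.2** (`prop:nullbv`): a linearly independent family of null,
mutually orthogonal bivectors (skew-symmetric bilinear forms) on `N`-dimensional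
Minkowski space has at most `N − 1` members. -/
theorem null_orthogonal_bivectors_le (N r : ℕ) (η : Matrix (Fin N) (Fin N) ℝ)
    (hηsymm : η.IsSymm)
    (hsig : ∃ P : Matrix (Fin N) (Fin N) ℝ, IsUnit P.det ∧ Pᵀ * η * P = minkDiag N)
    (K : Fin r → Matrix (Fin N) (Fin N) ℝ)
    (hskew : ∀ l, (K l)ᵀ = -(K l))
    (hli : LinearIndependent ℝ K)
    (horth : ∀ l m : Fin r, bivInner η (K l) (K m) = 0) :
    r ≤ N - 1 :=
  null_orthogonal_bivectors_le_general N r η hsig K hskew hli horth
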